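/- In the ring ℤ[x_1,...,x_n]/(e'_1,...,e'_n), where e'_i is the i-th elementary symmetric polynomial in x_1², ..., x_n², the class of the monomial x_1 x_2³ x_3⁵ ⋯ x_n^{2n-1} is nonzero. -/

import Mathlib

open MvPolynomial Finset

namespace PointClassAux

/-- A finset of naturals of cardinality `m` has sum at least `0+1+...+(m-1)`. -/
lemma sum_range_card_le (s : Finset ℕ) : ∑ i ∈ range s.card, i ≤ ∑ x ∈ s, x := by
  classical
  induction s using Finset.strongInductionOn with
  | _ s ih =>
    rcases s.eq_empty_or_nonempty with rfl | hs
    · simp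
    · have hm : s.max' hs ∈ s := s.max'_mem hs
      have hsub : s ⊆ range (s.max' hs + 1) := by
        intro x hx
        simp only [mem_range, Nat.lt_succ_iff]
        exact s.le_max' x hx
      have hcard : s.card ≤ s.max' hs + 1 := by
        simpa using Finset.card_le_card hsub
      have h1 : s.card - 1 ≤ s.max' hs := by omega
      have hrec := ih (s.erase (s.max' hs)) (Finset.erase_ssubset hm)
      have hce : (s.erase (s.max' hs)).card = s.card - 1 := Finset.card_erase_of_mem hm
      have hsum : ∑ x ∈ s, x = s.max' hs + ∑ x ∈ s.erase (s.max' hs), x :=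
        (Finset.add_sum_erase s id hm).symm
      have hc1 : 1 ≤ s.card := Finset.card_pos.mpr hs
      have h2 : s.card = (s.card - 1) + 1 := by omega
      have hss : ∑ i ∈ range s.card, i = ∑ i ∈ range (s.card - 1), i + (s.card - 1) := by
        conv_lhs => rw [h2]
        rw [Finset.sum_range_succ]
      rw [hsum, hss]
      rw [hce] at hrec
      omega

/-- An injective function `Fin m → ℕ` has sum at least `0+1+...+(m-1)`. -/
lemma sum_injective_ge {m : ℕ} (f : Fin m → ℕ) (hf : Function.Injective f) :
    ∑ i ∈ range m, i ≤ ∑ i : Fin m, f i := by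
  classical
  have himg : (Finset.image f univ).card = m := by
    rw [Finset.card_image_of_injective _ hf, Finset.card_univ, Fintype.card_fin]
  have h := sum_range_card_le (Finset.image f univ)
  rw [himg] at h
  calc ∑ i ∈ range m, i ≤ ∑ x ∈ Finset.image f univ, x := h
    _ = ∑ i : Fin m, f i := by rw [Finset.sum_image (fun a _ b _ h => hf h)]

variable {n : ℕ}

/-- The exponent vector of the `σ`-permuted staircase monomial. -/
noncomputable def Dm (σ : Equiv.Perm (Fin n)) : Fin n →₀ ℕ :=
  Finsupp.equivFunOnFinite.symm (fun l => 2 * ((σ l : ℕ)) + 1)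

lemma Dm_apply (σ : Equiv.Perm (Fin n)) (l : Fin n) : Dm σ l = 2 * (σ l : ℕ) + 1 := rfl

lemma Dm_apply_inj (σ : Equiv.Perm (Fin n)) {a b : Fin n} (h : Dm σ a = Dm σ b) : a = b := by
  rw [Dm_apply, Dm_apply] at h
  exact σ.injective (Fin.val_injective (by omega))

/-- The exponent vector of `∏_{j ∈ t} X j ^ 2`. -/
noncomputable def Mt (t : Finset (Fin n)) : Fin n →₀ ℕ := ∑ j ∈ t, Finsupp.single j 2

lemma Mt_apply (t : Finset (Fin n)) (l : Fin n) : Mt t l = if l ∈ t then 2 else 0 := by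
  classical
  rw [Mt, Finset.sum_apply']
  simp [Finsupp.single_apply]

lemma prod_sq_eq_monomial (t : Finset (Fin n)) :
    (∏ j ∈ t, (X j : MvPolynomial (Fin n) ℤ) ^ 2) = monomial (Mt t) 1 := by
  classical
  induction t using Finset.induction with
  | empty => simp [Mt]
  | insert _ _ h ih =>
      rename_i a s
      rw [Finset.prod_insert h, ih, X_pow_eq_monomial, monomial_mul, one_mul]
      congr 1
      rw [Mt, Mt, Finset.sum_insert h]

lemma Mt_sum (t : Finset (Fin n)) : ∑ l : Fin n, Mt t l = 2 * t.card := by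
  classical
  simp only [Mt_apply]
  rw [Finset.sum_ite_mem, Finset.univ_inter, Finset.sum_const, smul_eq_mul]
  ring

lemma Dm_sum (σ : Equiv.Perm (Fin n)) :
    ∑ l : Fin n, Dm σ l = 2 * (∑ i ∈ range n, i) + n := by
  have h1 : ∑ l : Fin n, (σ l : ℕ) = ∑ i ∈ range n, i := by
    rw [Equiv.sum_comp σ (fun i : Fin n => (i : ℕ))]
    exact Fin.sum_univ_eq_sum_range (fun i => i) n
  simp only [Dm_apply]
  rw [Finset.sum_add_distrib, ← Finset.mul_sum, h1]
  simp [Finset.card_univ]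

lemma not_inj (σ : Equiv.Perm (Fin n)) (t : Finset (Fin n)) (ht : t.Nonempty)
    (h : Mt t ≤ Dm σ) : ¬ Function.Injective (fun l => Dm σ l - Mt t l) := by
  intro hinj
  set v : Fin n → ℕ := fun l => Dm σ l - Mt t l with hv
  have hle : ∀ l, Mt t l ≤ Dm σ l := fun l => Finsupp.le_def.mp h l
  have hodd : ∀ l, v l = 2 * (v l / 2) + 1 := by
    intro l
    have h1 := hle l
    have h2 : Mt t l = 0 ∨ Mt t l = 2 := by rw [Mt_apply]; split <;> simp
    have h3 : Dm σ l = 2 * (σ l : ℕ) + 1 := Dm_apply σ l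
    have h4 : v l = Dm σ l - Mt t l := rfl
    omega
  have hw : Function.Injective (fun l => v l / 2) := by
    intro a b hab
    apply hinj
    have h1 := hodd a
    have h2 := hodd b
    simp only at hab
    show v a = v b
    omega
  have hS := sum_injective_ge _ hw
  have hsplit : ∑ l : Fin n, v l + ∑ l : Fin n, Mt t l = ∑ l : Fin n, Dm σ l := by
    rw [← Finset.sum_add_distrib]
    refine Finset.sum_congr rfl (fun l _ => ?_)
    have h1 := hle l
    have h4 : v l = Dm σ l - Mt t l := rfl
    omega
  have hvsum : ∑ l : Fin n, v l = 2 * (∑ l : Fin n, v l / 2) + n := by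
    calc ∑ l : Fin n, v l = ∑ l : Fin n, (2 * (v l / 2) + 1) :=
          Finset.sum_congr rfl (fun l _ => hodd l)
      _ = 2 * (∑ l : Fin n, v l / 2) + n := by
          rw [Finset.sum_add_distrib, ← Finset.mul_sum]
          simp [Finset.card_univ]
  have hMt := Mt_sum t
  have hDm := Dm_sum σ
  have hc : 1 ≤ t.card := Finset.card_pos.mpr ht
  omega

/-- Pick a collision pair of `v`, canonically (depending only on `v`). -/
noncomputable def pick (v : Fin n → ℕ) : Option (Fin n × Fin n) := by
  classical
  exact if h : ∃ q : Fin n × Fin n, q.1 ≠ q.2 ∧ v q.1 = v q.2 then some h.choose else none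

lemma pick_eq_some {v : Fin n → ℕ} (h : ¬ Function.Injective v) :
    ∃ q, pick v = some q ∧ q.1 ≠ q.2 ∧ v q.1 = v q.2 := by
  classical
  obtain ⟨a, b, hab, hne⟩ := Function.not_injective_iff.mp h
  have hex : ∃ q : Fin n × Fin n, q.1 ≠ q.2 ∧ v q.1 = v q.2 := ⟨(a, b), hne, hab⟩
  refine ⟨hex.choose, ?_, hex.choose_spec⟩
  rw [pick, dif_pos hex]

/-- One step of the involution: swap `i ∈ t` with `j ∉ t`. -/
lemma step (σ : Equiv.Perm (Fin n)) (t : Finset (Fin n)) (i j : Fin n)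
    (hij : i ≠ j) (hle : Mt t ≤ Dm σ)
    (hvij : Dm σ i - Mt t i = Dm σ j - Mt t j) (hi : i ∈ t) (hj : j ∉ t) :
    Mt (insert j (t.erase i)) ≤ Dm (σ * Equiv.swap i j) ∧
    (insert j (t.erase i)).card = t.card ∧
    (∀ l, Dm (σ * Equiv.swap i j) l - Mt (insert j (t.erase i)) l = Dm σ l - Mt t l) ∧
    Dm (σ * Equiv.swap i j) - Mt (insert j (t.erase i)) = Dm σ - Mt t := by
  classical
  have hle' : ∀ l, Mt t l ≤ Dm σ l := fun l => Finsupp.le_def.mp hle l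
  have hDm' : ∀ l, Dm (σ * Equiv.swap i j) l = Dm σ (Equiv.swap i j l) := by
    intro l; rw [Dm_apply, Dm_apply, Equiv.Perm.mul_apply]
  have hMi : Mt t i = 2 := by rw [Mt_apply, if_pos hi]
  have hMj : Mt t j = 0 := by rw [Mt_apply, if_neg hj]
  have hinotin : i ∉ insert j (t.erase i) := by
    simp [hij, Finset.mem_erase]
  have hjin : j ∈ insert j (t.erase i) := Finset.mem_insert_self _ _
  have hM' : ∀ l, Mt (insert j (t.erase i)) l =
      if l = j then 2 else if l = i then 0 else Mt t l := by
    intro l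
    rw [Mt_apply, Mt_apply]
    by_cases hlj : l = j
    · subst hlj; simp [hjin]
    · by_cases hli : l = i
      · subst hli; simp [hinotin, hlj]
      · simp [hlj, hli, Finset.mem_insert, Finset.mem_erase]
  have key : ∀ l, Mt (insert j (t.erase i)) l ≤ Dm (σ * Equiv.swap i j) l ∧
      Dm (σ * Equiv.swap i j) l - Mt (insert j (t.erase i)) l = Dm σ l - Mt t l := by
    intro l
    rcases eq_or_ne l i with rfl | hli
    · have a1 : Dm (σ * Equiv.swap l j) l = Dm σ j := by
        rw [hDm' l, Equiv.swap_apply_left]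
      have a2 : Mt (insert j (t.erase l)) l = 0 := by
        rw [hM' l, if_neg hij, if_pos rfl]
      have a3 := hle' l
      have a4 := hle' j
      rw [a1, a2]
      omega
    · rcases eq_or_ne l j with rfl | hlj
      · have b1 : Dm (σ * Equiv.swap i l) l = Dm σ i := by
          rw [hDm' l, Equiv.swap_apply_right]
        have b2 : Mt (insert l (t.erase i)) l = 2 := by
          rw [hM' l, if_pos rfl]
        have b3 := hle' i
        have b4 := hle' l
        rw [b1, b2]
        omega
      · have c1 : Dm (σ * Equiv.swap i j) l = Dm σ l := by
          rw [hDm' l, Equiv.swap_apply_of_ne_of_ne hli hlj]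
        have c2 : Mt (insert j (t.erase i)) l = Mt t l := by
          rw [hM' l, if_neg hlj, if_neg hli]
        rw [c1, c2]
        exact ⟨hle' l, rfl⟩
  refine ⟨Finsupp.le_def.mpr (fun l => (key l).1), ?_, fun l => (key l).2, ?_⟩
  · rw [Finset.card_insert_of_notMem (fun hjm => hj (Finset.mem_of_mem_erase hjm)),
      Finset.card_erase_of_mem hi]
    have : 1 ≤ t.card := Finset.card_pos.mpr ⟨i, hi⟩
    omega
  · ext l
    rw [Finsupp.tsub_apply, Finsupp.tsub_apply]
    exact (key l).2

open Classical in
/-- The sign-reversing involution. -/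
noncomputable def flip (k : ℕ) (p : Equiv.Perm (Fin n) × Finset (Fin n)) :
    Equiv.Perm (Fin n) × Finset (Fin n) :=
  if Mt p.2 ≤ Dm p.1 then
    (pick (fun l => Dm p.1 l - Mt p.2 l)).elim p (fun q =>
      (p.1 * Equiv.swap q.1 q.2,
        if q.1 ∈ p.2 then insert q.2 (p.2.erase q.1) else insert q.1 (p.2.erase q.2)))
  else p

lemma flip_of_neg {k : ℕ} {p : Equiv.Perm (Fin n) × Finset (Fin n)}
    (h : ¬ Mt p.2 ≤ Dm p.1) : flip k p = p := by
  rw [flip, if_neg h]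

lemma flip_spec (k : ℕ) (p : Equiv.Perm (Fin n) × Finset (Fin n))
    (hp : p.2.card = k + 1) (hcond : Mt p.2 ≤ Dm p.1) :
    ∃ σ' t', flip k p = (σ', t') ∧
      Mt t' ≤ Dm σ' ∧ t'.card = k + 1 ∧
      ((Equiv.Perm.sign σ' : ℤ) = -(Equiv.Perm.sign p.1 : ℤ)) ∧
      Dm σ' - Mt t' = Dm p.1 - Mt p.2 ∧
      flip k (σ', t') = p ∧ σ' ≠ p.1 := by
  classical
  obtain ⟨σ, t⟩ := p
  have hp' : t.card = k + 1 := hp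
  have hne' : t.Nonempty := Finset.card_pos.mp (by omega)
  have hni := not_inj σ t hne' hcond
  obtain ⟨q, hq, hqne, hvq⟩ := pick_eq_some hni
  have hDne : Dm σ q.1 ≠ Dm σ q.2 := fun e => hqne (Dm_apply_inj σ e)
  have hle' : ∀ l, Mt t l ≤ Dm σ l := fun l => Finsupp.le_def.mp hcond l
  have hm1 := Mt_apply t q.1
  have hm2 := Mt_apply t q.2
  have h1 := hle' q.1
  have h2 := hle' q.2
  have hmem : (q.1 ∈ t ∧ q.2 ∉ t) ∨ (q.1 ∉ t ∧ q.2 ∈ t) := by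
    by_cases a : q.1 ∈ t <;> by_cases b : q.2 ∈ t
    · rw [if_pos a] at hm1; rw [if_pos b] at hm2; omega
    · exact Or.inl ⟨a, b⟩
    · exact Or.inr ⟨a, b⟩
    · rw [if_neg a] at hm1; rw [if_neg b] at hm2; omega
  -- unfold `flip` at `p`
  have hflip : flip k (σ, t) =
      (σ * Equiv.swap q.1 q.2,
        if q.1 ∈ t then insert q.2 (t.erase q.1) else insert q.1 (t.erase q.2)) := by
    rw [flip, if_pos hcond]
    simp only [hq, Option.elim]
  rcases hmem with ⟨hi, hj⟩ | ⟨hj, hi⟩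
  · -- q.1 ∈ t, q.2 ∉ t
    obtain ⟨hS1, hS2, hS3, hS4⟩ := step σ t q.1 q.2 hqne hcond hvq hi hj
    set σ' := σ * Equiv.swap q.1 q.2 with hσ'
    set t' := insert q.2 (t.erase q.1) with ht'
    refine ⟨σ', t', by rw [hflip, if_pos hi], hS1, by omega, ?_, hS4, ?_, ?_⟩
    · simp [hσ', Equiv.Perm.sign_mul, Equiv.Perm.sign_swap hqne]
    · -- flip of the image
      have hcond' : Mt t' ≤ Dm σ' := hS1
      have hveq : (fun l => Dm σ' l - Mt t' l) = (fun l => Dm σ l - Mt t l) :=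
        funext hS3
      have hq1t' : q.1 ∉ t' := by simp [ht', Finset.mem_erase, hqne]
      rw [flip, if_pos hcond']
      simp only [hveq, hq, Option.elim, if_neg hq1t']
      refine Prod.ext ?_ ?_
      · show σ' * Equiv.swap q.1 q.2 = σ
        rw [hσ', mul_assoc, Equiv.swap_mul_self, mul_one]
      · show insert q.1 (t'.erase q.2) = t
        rw [ht', Finset.erase_insert (by simp [Finset.mem_erase, hj]),
          Finset.insert_erase hi]
    · intro he
      have h3 : Equiv.swap q.1 q.2 = 1 := by rwa [hσ', mul_eq_left] at he
      have h4 : Equiv.swap q.1 q.2 q.1 = (1 : Equiv.Perm (Fin n)) q.1 := by rw [h3]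
      simp only [Equiv.swap_apply_left, Equiv.Perm.coe_one, id_eq] at h4
      exact hqne h4.symm
  · -- q.2 ∈ t, q.1 ∉ t
    obtain ⟨hS1, hS2, hS3, hS4⟩ := step σ t q.2 q.1 (Ne.symm hqne) hcond hvq.symm hi hj
    rw [Equiv.swap_comm q.2 q.1] at hS1 hS3 hS4
    set σ' := σ * Equiv.swap q.1 q.2 with hσ'
    set t' := insert q.1 (t.erase q.2) with ht'
    refine ⟨σ', t', by rw [hflip, if_neg hj], hS1, by omega, ?_, hS4, ?_, ?_⟩
    · simp [hσ', Equiv.Perm.sign_mul, Equiv.Perm.sign_swap hqne]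
    · have hcond' : Mt t' ≤ Dm σ' := hS1
      have hveq : (fun l => Dm σ' l - Mt t' l) = (fun l => Dm σ l - Mt t l) :=
        funext hS3
      have hq1t' : q.1 ∈ t' := Finset.mem_insert_self _ _
      rw [flip, if_pos hcond']
      simp only [hveq, hq, Option.elim, if_pos hq1t']
      refine Prod.ext ?_ ?_
      · show σ' * Equiv.swap q.1 q.2 = σ
        rw [hσ', mul_assoc, Equiv.swap_mul_self, mul_one]
      · show insert q.2 (t'.erase q.1) = t
        rw [ht', Finset.erase_insert (by simp [Finset.mem_erase, hj]),
          Finset.insert_erase hi]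
    · intro he
      have h3 : Equiv.swap q.1 q.2 = 1 := by rwa [hσ', mul_eq_left] at he
      have h4 : Equiv.swap q.1 q.2 q.1 = (1 : Equiv.Perm (Fin n)) q.1 := by rw [h3]
      simp only [Equiv.swap_apply_left, Equiv.Perm.coe_one, id_eq] at h4
      exact hqne h4.symm

/-- The antisymmetrizing linear functional. -/
noncomputable def lam (f : MvPolynomial (Fin n) ℤ) : ℤ :=
  ∑ σ : Equiv.Perm (Fin n), (Equiv.Perm.sign σ : ℤ) * coeff (Dm σ) f

lemma lam_zero : lam (0 : MvPolynomial (Fin n) ℤ) = 0 := by simp [lam]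

lemma lam_add (f g : MvPolynomial (Fin n) ℤ) : lam (f + g) = lam f + lam g := by
  simp [lam, coeff_add, mul_add, Finset.sum_add_distrib]

lemma lam_mul_gen (g : MvPolynomial (Fin n) ℤ) (k : ℕ) :
    lam (g * ∑ t ∈ Finset.univ.powersetCard (k + 1),
      ∏ j ∈ t, (X j : MvPolynomial (Fin n) ℤ) ^ 2) = 0 := by
  classical
  set F : Equiv.Perm (Fin n) × Finset (Fin n) → ℤ := fun p =>
    (Equiv.Perm.sign p.1 : ℤ) *
      (if Mt p.2 ≤ Dm p.1 then coeff (Dm p.1 - Mt p.2) g else 0) with hF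
  have hco : ∀ σ : Equiv.Perm (Fin n),
      coeff (Dm σ) (g * ∑ t ∈ Finset.univ.powersetCard (k + 1),
        ∏ j ∈ t, (X j : MvPolynomial (Fin n) ℤ) ^ 2)
      = ∑ t ∈ Finset.univ.powersetCard (k + 1),
          (if Mt t ≤ Dm σ then coeff (Dm σ - Mt t) g else 0) := by
    intro σ
    rw [Finset.mul_sum, coeff_sum]
    refine Finset.sum_congr rfl (fun t _ => ?_)
    rw [prod_sq_eq_monomial, coeff_mul_monomial']
    split_ifs <;> simp
  have hrw : lam (g * ∑ t ∈ Finset.univ.powersetCard (k + 1),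
      ∏ j ∈ t, (X j : MvPolynomial (Fin n) ℤ) ^ 2)
      = ∑ p ∈ Finset.univ ×ˢ Finset.univ.powersetCard (k + 1), F p := by
    rw [lam, Finset.sum_product]
    refine Finset.sum_congr rfl (fun σ _ => ?_)
    rw [hco, Finset.mul_sum]
  rw [hrw]
  have hcard : ∀ p : Equiv.Perm (Fin n) × Finset (Fin n),
      p ∈ Finset.univ ×ˢ Finset.univ.powersetCard (k + 1) → p.2.card = k + 1 := by
    intro p hp
    rw [Finset.mem_product, Finset.mem_powersetCard_univ] at hp
    exact hp.2
  refine Finset.sum_involution (fun p _ => flip k p) ?_ ?_ ?_ ?_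
  · -- F p + F (flip k p) = 0
    intro p hp
    show F p + F (flip k p) = 0
    by_cases hcond : Mt p.2 ≤ Dm p.1
    · obtain ⟨σ', t', hfl, hle', _, hsgn, hD, _, _⟩ := flip_spec k p (hcard p hp) hcond
      rw [hfl, hF]
      simp only [if_pos hcond, if_pos hle', hD, hsgn]
      ring
    · rw [flip_of_neg hcond, hF]
      simp [if_neg hcond]
  · -- F p ≠ 0 → flip k p ≠ p
    intro p hp hFp
    show flip k p ≠ p
    by_contra hcc
    revert hcc
    have hcond : Mt p.2 ≤ Dm p.1 := by
      by_contra hc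
      apply hFp
      rw [hF]
      simp [if_neg hc]
    obtain ⟨σ', t', hfl, _, _, _, _, _, hσ⟩ := flip_spec k p (hcard p hp) hcond
    rw [hfl]
    intro he
    exact hσ (congrArg Prod.fst he)
  · -- membership
    intro p hp
    show flip k p ∈ Finset.univ ×ˢ Finset.univ.powersetCard (k + 1)
    by_cases hcond : Mt p.2 ≤ Dm p.1
    · obtain ⟨σ', t', hfl, _, hc', _, _, _, _⟩ := flip_spec k p (hcard p hp) hcond
      rw [hfl, Finset.mem_product, Finset.mem_powersetCard_univ]
      exact ⟨Finset.mem_univ _, hc'⟩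
    · rw [flip_of_neg hcond]; exact hp
  · -- involutive
    intro p hp
    show flip k (flip k p) = p
    by_cases hcond : Mt p.2 ≤ Dm p.1
    · obtain ⟨σ', t', hfl, _, _, _, _, hff, _⟩ := flip_spec k p (hcard p hp) hcond
      rw [hfl, hff]
    · rw [flip_of_neg hcond, flip_of_neg hcond]

lemma lam_top : lam (monomial (Dm (1 : Equiv.Perm (Fin n))) (1 : ℤ)) = 1 := by
  classical
  have hco : ∀ σ : Equiv.Perm (Fin n),
      coeff (Dm σ) (monomial (Dm (1 : Equiv.Perm (Fin n))) (1 : ℤ))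
        = if σ = 1 then 1 else 0 := by
    intro σ
    rw [coeff_monomial]
    by_cases hσ : σ = 1
    · subst hσ; simp
    · rw [if_neg hσ, if_neg]
      intro he
      apply hσ
      refine Equiv.ext fun l => ?_
      have h1 : Dm (1 : Equiv.Perm (Fin n)) l = 2 * (l : ℕ) + 1 := by
        rw [Dm_apply]; simp
      have h2 : Dm σ l = 2 * (σ l : ℕ) + 1 := Dm_apply σ l
      have h4 : Dm (1 : Equiv.Perm (Fin n)) l = Dm σ l := by rw [he]
      have h5 : (σ l : ℕ) = (l : ℕ) := by omega
      have h6 : σ l = l := Fin.val_injective h5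
      simp [h6]
  rw [lam]
  calc ∑ σ : Equiv.Perm (Fin n), (Equiv.Perm.sign σ : ℤ) *
        coeff (Dm σ) (monomial (Dm (1 : Equiv.Perm (Fin n))) (1 : ℤ))
      = ∑ σ : Equiv.Perm (Fin n), if σ = 1 then (Equiv.Perm.sign σ : ℤ) else 0 := by
        refine Finset.sum_congr rfl (fun σ _ => ?_)
        rw [hco]
        split_ifs <;> simp
    _ = 1 := by
        rw [Finset.sum_ite_eq' Finset.univ (1 : Equiv.Perm (Fin n))]
        simp

lemma top_eq :
    (∏ i : Fin n, (X i : MvPolynomial (Fin n) ℤ) ^ (2 * (i : ℕ) + 1))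
      = monomial (Dm (1 : Equiv.Perm (Fin n))) 1 := by
  classical
  have hsupp : (Dm (1 : Equiv.Perm (Fin n))).support = Finset.univ := by
    ext l
    simp only [Finsupp.mem_support_iff, Finset.mem_univ, iff_true]
    rw [Dm_apply]
    omega
  rw [← prod_X_pow_eq_monomial, hsupp]
  refine Finset.prod_congr rfl (fun i _ => ?_)
  rw [Dm_apply]
  simp

end PointClassAux

open PointClassAux in
/-- In `ℤ[x₁,...,xₙ]/(e'₁,...,e'ₙ)`, where `e'ᵢ` is the `i`-th elementary
symmetric polynomial in `x₁²,...,xₙ²` (the cohomology ring of `Sp(2n,ℂ)/B`), the class of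
the monomial `x₁ x₂³ ⋯ xₙ^{2n-1}` is nonzero. Here the variable `xᵢ` is `X i` for
`i : Fin n` and the exponent of `X i` is `2(i+1) − 1 = 2i + 1`. -/
theorem point_class_nonzero (n : ℕ) (hn : 1 ≤ n) :
    Ideal.Quotient.mk
      (Ideal.span
        ((fun i : Fin n =>
            ∑ t ∈ Finset.univ.powersetCard ((i : ℕ) + 1),
              ∏ j ∈ t, (X j : MvPolynomial (Fin n) ℤ) ^ 2) '' Set.univ))
      (∏ i : Fin n, (X i : MvPolynomial (Fin n) ℤ) ^ (2 * (i : ℕ) + 1)) ≠ 0 := by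
  intro h0
  rw [Ideal.Quotient.eq_zero_iff_mem] at h0
  have key : ∀ f ∈ Ideal.span
      ((fun i : Fin n =>
          ∑ t ∈ Finset.univ.powersetCard ((i : ℕ) + 1),
            ∏ j ∈ t, (X j : MvPolynomial (Fin n) ℤ) ^ 2) '' Set.univ),
      ∀ g : MvPolynomial (Fin n) ℤ, lam (g * f) = 0 := by
    intro f hf
    refine Submodule.span_induction ?_ ?_ ?_ ?_ hf
    · rintro x ⟨i, -, rfl⟩ g
      exact lam_mul_gen g (i : ℕ)
    · intro g
      rw [mul_zero, lam_zero]
    · intro x y _ _ hx hy g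
      rw [mul_add, lam_add, hx g, hy g, add_zero]
    · intro a x _ hx g
      rw [smul_eq_mul, ← mul_assoc, hx (g * a)]
  have h1 := key _ h0 1
  rw [one_mul, top_eq, lam_top] at h1
  exact one_ne_zero h1
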